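/- Let Ψ be a Max-2OR instance with m_1 1-clauses and m_2 2-clauses. Then val_Ψ ≥ (m_1 + m_2 + bias(Ψ))/2. (Lemma 3.10, part 1.) -/

import Mathlib

/-- A `Max-2OR` clause: either a 1-clause (a single literal) or a 2-clause
(disjunction of two literals on distinct variables). A literal on variable `i`
with polarity `b` (`b = true` for `xᵢ`, `b = false` for `¬xᵢ`) evaluates to `σ i == b`. -/
inductive OrClause (n : ℕ) where
  | one (i : Fin n) (b : Bool)
  | two (i : Fin n) (bi : Bool) (j : Fin n) (bj : Bool) (hij : i ≠ j)

/-- Evaluation of a clause under an assignment. -/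
def OrClause.eval {n : ℕ} (σ : Fin n → Bool) : OrClause n → Bool
  | .one i b => σ i == b
  | .two i bi j bj _ => (σ i == bi) || (σ j == bj)

/-- Whether a clause is a 1-clause. -/
def OrClause.isOne {n : ℕ} : OrClause n → Bool
  | .one _ _ => true
  | .two _ _ _ _ _ => false

/-- `m₁`: the number of 1-clauses. -/
def numOne {n : ℕ} (Ψ : List (OrClause n)) : ℕ := Ψ.countP OrClause.isOne

/-- `m₂`: the number of 2-clauses. -/
def numTwo {n : ℕ} (Ψ : List (OrClause n)) : ℕ := Ψ.countP (fun C => !C.isOne)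

/-- The number of clauses of `Ψ` satisfied by `σ`, i.e. `val_Ψ(σ)`. -/
def satCount {n : ℕ} (Ψ : List (OrClause n)) (σ : Fin n → Bool) : ℕ :=
  Ψ.countP (fun C => C.eval σ)

/-- `val_Ψ`: the maximum number of simultaneously satisfiable clauses. -/
def maxVal {n : ℕ} (Ψ : List (OrClause n)) : ℕ :=
  Finset.univ.sup (fun σ : Fin n → Bool => satCount Ψ σ)

/-- `pos_i^{(1)}(Ψ)`: the number of 1-clauses containing the literal `xᵢ`
(`negᵢ^{(1)}` for `¬xᵢ`, according to polarity `b`). -/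
def cnt1 {n : ℕ} (Ψ : List (OrClause n)) (v : Fin n) (b : Bool) : ℕ :=
  (Ψ.map (fun C => match C with
    | .one i b' => if i = v ∧ b' = b then 1 else 0
    | .two _ _ _ _ _ => 0)).sum

/-- `pos_i^{(2)}(Ψ)`: the number of 2-clauses containing the literal `xᵢ`
(`negᵢ^{(2)}` for `¬xᵢ`, according to polarity `b`). -/
def cnt2 {n : ℕ} (Ψ : List (OrClause n)) (v : Fin n) (b : Bool) : ℕ :=
  (Ψ.map (fun C => match C with
    | .one _ _ => 0
    | .two i bi j bj _ => (if i = v ∧ bi = b then 1 else 0)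
                        + (if j = v ∧ bj = b then 1 else 0))).sum

/-- `bias(Ψ) = (1/2) Σᵢ |2 posᵢ⁽¹⁾ + posᵢ⁽²⁾ − 2 negᵢ⁽¹⁾ − negᵢ⁽²⁾|`. -/
noncomputable def bias {n : ℕ} (Ψ : List (OrClause n)) : ℝ :=
  (1/2) * ∑ v : Fin n,
    |2 * (cnt1 Ψ v true : ℝ) + (cnt2 Ψ v true : ℝ)
      - 2 * (cnt1 Ψ v false : ℝ) - (cnt2 Ψ v false : ℝ)|

/-!
Give the literal `xᵥ = b` the weight `w(v, b) = 2·#(1-clauses on it) + #(2-clauses containing it)`,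
so that `bias(Ψ) = ½ Σᵥ |w(v, 1) - w(v, 0)|`. Every clause spreads total weight 2 over its
literals, so `Σᵥ (w(v, 1) + w(v, 0)) = 2(m₁ + m₂)`; and the literals made true by an assignment `σ`
receive weight at most 2 from each clause `σ` satisfies and none from a clause it violates, so
`Σᵥ w(v, σ v) ≤ 2·val_Ψ(σ)`. Choosing each `σ v` greedily to maximise `w(v, σ v)` gives
`2·val_Ψ ≥ Σᵥ max (w(v, 1), w(v, 0)) = m₁ + m₂ + bias(Ψ)`.
-/

namespace OrClause

variable {n : ℕ}

def litWeight (v : Fin n) (b : Bool) : OrClause n → ℕ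
  | .one i b' => if i = v ∧ b' = b then 2 else 0
  | .two i bi j bj _ => (if i = v ∧ bi = b then 1 else 0) + (if j = v ∧ bj = b then 1 else 0)

lemma sum_litWeight_le (σ : Fin n → Bool) (C : OrClause n) :
    ∑ v, C.litWeight v (σ v) ≤ 2 * (C.eval σ).toNat := by
  cases C with
  | one i b => by_cases h : b = σ i <;> simp [litWeight, eval, ite_and, h]
  | two i bi j bj _ =>
    simp only [litWeight, Finset.sum_add_distrib, ite_and, Finset.sum_ite_eq, Finset.mem_univ,
      if_true]
    by_cases hi : bi = σ i <;> by_cases hj : bj = σ j <;> simp [eval, hi, hj]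

lemma sum_litWeight_true_add_false (C : OrClause n) :
    ∑ v, (C.litWeight v true + C.litWeight v false) = 2 := by
  cases C with
  | one i b => cases b <;> simp [litWeight]
  | two i bi j bj _ => cases bi <;> cases bj <;> simp [litWeight, Finset.sum_add_distrib]

end OrClause

section

variable {n : ℕ} (Ψ : List (OrClause n))

def litWeight (v : Fin n) (b : Bool) : ℕ := 2 * cnt1 Ψ v b + cnt2 Ψ v b

lemma litWeight_eq_sum_map (v : Fin n) (b : Bool) :
    litWeight Ψ v b = (Ψ.map (OrClause.litWeight v b)).sum := by
  induction Ψ with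
  | nil => simp [litWeight, cnt1, cnt2]
  | cons C Ψ ih =>
    simp only [litWeight, cnt1, cnt2, List.map_cons, List.sum_cons] at ih ⊢
    cases C <;> simp only [OrClause.litWeight] <;> split_ifs <;> omega

lemma sum_litWeight_le_two_mul_satCount (σ : Fin n → Bool) :
    ∑ v, litWeight Ψ v (σ v) ≤ 2 * satCount Ψ σ := by
  simp only [litWeight_eq_sum_map]
  induction Ψ with
  | nil => simp
  | cons C Ψ ih =>
    have hC := C.sum_litWeight_le σ
    simp only [satCount, List.map_cons, List.sum_cons, Finset.sum_add_distrib,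
      List.countP_cons] at ih ⊢
    cases h : C.eval σ <;>
      simp only [h, Bool.toNat_false, Bool.toNat_true, Bool.false_eq_true, ↓reduceIte] at hC ⊢ <;>
      omega

lemma sum_litWeight_true_add_false :
    ∑ v, (litWeight Ψ v true + litWeight Ψ v false) = 2 * Ψ.length := by
  simp only [litWeight_eq_sum_map]
  induction Ψ with
  | nil => simp
  | cons C Ψ ih =>
    have hC := C.sum_litWeight_true_add_false
    simp only [List.map_cons, List.sum_cons, List.length_cons, Finset.sum_add_distrib] at ih hC ⊢
    omega

lemma numOne_add_numTwo : numOne Ψ + numTwo Ψ = Ψ.length := by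
  simp [numOne, numTwo, Ψ.length_eq_countP_add_countP OrClause.isOne]

lemma bias_eq_half_sum_abs_sub :
    bias Ψ = 1 / 2 * ∑ v, |(litWeight Ψ v false : ℝ) - litWeight Ψ v true| := by
  simp only [bias, litWeight, Nat.cast_add, Nat.cast_mul, Nat.cast_ofNat]
  congr 1
  refine Finset.sum_congr rfl fun v _ => ?_
  rw [abs_sub_comm]; ring_nf

lemma sum_max_litWeight_le_two_mul_maxVal :
    ∑ v, max (litWeight Ψ v true) (litWeight Ψ v false) ≤ 2 * maxVal Ψ := by
  let σ : Fin n → Bool := fun v => decide (litWeight Ψ v false ≤ litWeight Ψ v true)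
  have hσ : ∀ v, max (litWeight Ψ v true) (litWeight Ψ v false) = litWeight Ψ v (σ v) := by
    intro v
    by_cases h : litWeight Ψ v false ≤ litWeight Ψ v true
    · simp [σ, h]
    · simp [σ, h, (not_le.mp h).le]
  calc ∑ v, max (litWeight Ψ v true) (litWeight Ψ v false)
      = ∑ v, litWeight Ψ v (σ v) := Finset.sum_congr rfl fun v _ => hσ v
    _ ≤ 2 * satCount Ψ σ := sum_litWeight_le_two_mul_satCount Ψ σ
    _ ≤ 2 * maxVal Ψ := Nat.mul_le_mul_left 2 (Finset.le_sup (Finset.mem_univ σ))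

end

/-- Lemma 3.10, part 1: `val_Ψ ≥ (m₁ + m₂ + bias(Ψ))/2`. -/
theorem or_bias_lower_bound_one {n : ℕ} (Ψ : List (OrClause n)) :
    ((numOne Ψ : ℝ) + (numTwo Ψ : ℝ) + bias Ψ) / 2 ≤ (maxVal Ψ : ℝ) := by
  have hmax : ∑ v, (max (litWeight Ψ v true) (litWeight Ψ v false) : ℝ) ≤ 2 * maxVal Ψ := by
    exact_mod_cast sum_max_litWeight_le_two_mul_maxVal Ψ
  have htotal : ∑ v, ((litWeight Ψ v true : ℝ) + litWeight Ψ v false) = 2 * Ψ.length := by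
    exact_mod_cast sum_litWeight_true_add_false Ψ
  have hm : (numOne Ψ : ℝ) + numTwo Ψ = Ψ.length := by exact_mod_cast numOne_add_numTwo Ψ
  have hsplit : 2 * ∑ v, (max (litWeight Ψ v true) (litWeight Ψ v false) : ℝ)
      = ∑ v, ((litWeight Ψ v true : ℝ) + litWeight Ψ v false)
        + ∑ v, |(litWeight Ψ v false : ℝ) - litWeight Ψ v true| := by
    rw [Finset.mul_sum, ← Finset.sum_add_distrib]
    exact Finset.sum_congr rfl fun v _ => by
      simpa only [two_nsmul, ← two_mul] using two_nsmul_sup_eq_add_add_abs_sub (α := ℝ) _ _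
  rw [bias_eq_half_sum_abs_sub, hm]
  linarith
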